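/- For a bijection b : A → B between cofinite subsets of ℕ, an ultrafilter p ∈ ℕ* is a fixed point of the induced map on ℕ* if and only if {n ∈ A : b(n) = n} ∈ p; equivalently the fixed-point set equals the clopen set determined by {n ∈ A : b(n) = n}. -/

import Mathlib

open Classical in
/-- Greedy 3-coloring of the functional graph of `f` restricted to `D`. -/
noncomputable def col (D : Set ℕ) (f : ℕ → ℕ) : ℕ → Fin 3
  | n =>
    let s1 : Finset (Fin 3) := if h : n ∈ D ∧ f n < n then {col D f (f n)} else ∅
    let s2 : Finset (Fin 3) :=
      if h : ∃ m, m ∈ D ∧ f m = n ∧ m < n then {col D f h.choose} else ∅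
    (Finset.univ \ (s1 ∪ s2)).min' (by
      apply Finset.card_pos.mp
      have h1 : s1.card ≤ 1 := by unfold s1; split <;> simp
      have h2 : s2.card ≤ 1 := by unfold s2; split <;> simp
      have hu := Finset.card_union_le s1 s2
      have hle := Finset.le_card_sdiff (s1 ∪ s2) (Finset.univ : Finset (Fin 3))
      simp only [Finset.card_univ, Fintype.card_fin] at hle
      omega)
  decreasing_by all_goals (rename_i h; first | exact h.2 | exact h.choose_spec.2.2)

open Classical in
lemma col_not_mem (D : Set ℕ) (f : ℕ → ℕ) (n : ℕ) :
    col D f n ∉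
      (if h : n ∈ D ∧ f n < n then ({col D f (f n)} : Finset (Fin 3)) else ∅) ∪
      (if h : ∃ m, m ∈ D ∧ f m = n ∧ m < n then ({col D f h.choose} : Finset (Fin 3)) else ∅) := by
  have h : col D f n ∈ Finset.univ \
      ((if h : n ∈ D ∧ f n < n then ({col D f (f n)} : Finset (Fin 3)) else ∅) ∪
      (if h : ∃ m, m ∈ D ∧ f m = n ∧ m < n then ({col D f h.choose} : Finset (Fin 3)) else ∅)) := by
    conv in col D f n => rw [col]
    exact Finset.min'_mem _ _
  exact fun hmem => (Finset.mem_sdiff.mp h).2 hmem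

open Classical in
lemma col_ne (D : Set ℕ) (f : ℕ → ℕ) (hinj : Set.InjOn f D) {n : ℕ}
    (hn : n ∈ D) (hne : f n ≠ n) : col D f (f n) ≠ col D f n := by
  rcases lt_or_gt_of_ne hne with hlt | hgt
  · intro heq
    apply col_not_mem D f n
    rw [Finset.mem_union]
    left
    rw [dif_pos ⟨hn, hlt⟩]
    simp [heq]
  · intro heq
    have hex : ∃ m, m ∈ D ∧ f m = f n ∧ m < f n := ⟨n, hn, rfl, hgt⟩
    apply col_not_mem D f (f n)
    rw [Finset.mem_union]
    right
    rw [dif_pos hex]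
    have hch : hex.choose = n := hinj hex.choose_spec.1 hn hex.choose_spec.2.1
    simp [hch, heq]

/-- `ℕ* = βℕ \ ℕ`, modeled as the space of nonprincipal (free) ultrafilters on `ℕ`. -/
def NStar : Type := {p : Ultrafilter ℕ // ∀ n : ℕ, p ≠ pure n}

instance : TopologicalSpace NStar :=
  instTopologicalSpaceSubtype (p := fun p : Ultrafilter ℕ => ∀ n : ℕ, p ≠ pure n)

/-- For a bijection `b : A → B` between cofinite subsets of `ℕ`, a free ultrafilter
`p ∈ ℕ*` is a fixed point of the induced map `p ↦ Ultrafilter.map b p` if and only if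
`{n ∈ A : b n = n} ∈ p`; i.e. the fixed-point set is the basic clopen set
`E* = {p : E ∈ p}` determined by `E = {n ∈ A : b n = n}`. -/
theorem stmt3 (A B : Set ℕ) (hA : Aᶜ.Finite) (hB : Bᶜ.Finite)
    (b : ℕ → ℕ) (hb : Set.BijOn b A B) :
    ∀ p : NStar, Ultrafilter.map b p.1 = p.1 ↔ {n : ℕ | n ∈ A ∧ b n = n} ∈ p.1 := by
  rintro ⟨p, hfree⟩
  constructor
  · intro hfix
    by_contra hE
    have hcof : (p : Filter ℕ) ≤ Filter.cofinite := by
      rcases p.le_cofinite_or_eq_pure with h | ⟨a, ha⟩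
      · exact h
      · exact absurd ha (hfree a)
    have hAp : A ∈ p := hcof (Filter.mem_cofinite.mpr hA)
    set D : Set ℕ := {n | n ∈ A ∧ b n ≠ n} with hDdef
    have hDp : D ∈ p := by
      have hEc : {n : ℕ | n ∈ A ∧ b n = n}ᶜ ∈ p := Ultrafilter.compl_mem_iff_notMem.mpr hE
      filter_upwards [hAp, hEc] with n hnA hnE
      exact ⟨hnA, fun h => hnE ⟨hnA, h⟩⟩
    have hinj : Set.InjOn b D := hb.injOn.mono (fun n hn => hn.1)
    set c := col D b with hc
    obtain ⟨i, hi⟩ := Ultrafilter.eq_pure_of_finite (Ultrafilter.map c p)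
    have hci : {n : ℕ | c n = i} ∈ p := by
      have : {i} ∈ (pure i : Ultrafilter (Fin 3)) := by simp
      rw [← hi, Ultrafilter.mem_map] at this
      exact this
    have hS : D ∩ {n | c n = i} ∈ p := Filter.inter_mem hDp hci
    have hbS : b ⁻¹' (D ∩ {n | c n = i}) ∈ p := by
      have : D ∩ {n | c n = i} ∈ Ultrafilter.map b p := hfix ▸ hS
      exact Ultrafilter.mem_map.mp this
    obtain ⟨n, ⟨⟨hnD, hnc⟩, hbnD, hbnc⟩⟩ :=
      Ultrafilter.nonempty_of_mem (Filter.inter_mem hS hbS)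
    exact col_ne D b hinj hnD hnD.2 (hbnc.trans hnc.symm)
  · intro hE
    apply Ultrafilter.coe_injective
    rw [Ultrafilter.coe_map]
    have hEq : b =ᶠ[(p : Filter ℕ)] id :=
      Filter.eventuallyEq_of_mem hE (fun n hn => hn.2)
    rw [Filter.map_congr hEq, Filter.map_id]
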